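/- GHZ-like output genuine multipartite entanglement (n = 3 case): if ⟨φᵢ| (ŨᵢUᵢ)†(UᵢŨᵢ) |φᵢ⟩ = 0 for i = 0,1,2, then the normalized state ψ ∝ (⊗ᵢ₌₀² UᵢŨᵢ + ⊗ᵢ₌₀² ŨᵢUᵢ)(|φ₀φ₁φ₂⟩) has all three single-qubit reduced density matrices equal to (1/2)·I; in particular Tr(ρᵢ²) = 1/2 for each i, so the GME concurrence C_GME(ψ) = √(2·min_i(1 − Tr ρᵢ²)) equals 1. -/

import Mathlib

/-!
With `aᵢ = UᵢŨᵢφᵢ` and `bᵢ = ŨᵢUᵢφᵢ`, unitarity and the hypothesis make each `(aᵢ, bᵢ)` an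
orthonormal basis of `ℂ²`, and the output is the GHZ-type state `(a₀a₁a₂ + b₀b₁b₂)/√2`.
Tracing out two parties, orthogonality kills the cross terms, so
`ρᵢ = ½(|aᵢ⟩⟨aᵢ| + |bᵢ⟩⟨bᵢ|) = ½·I` by completeness of the basis `(aᵢ, bᵢ)`.
-/

open Matrix Complex

noncomputable section

abbrev Q3 := Fin 2 × Fin 2 × Fin 2

def inner2 (u v : Fin 2 → ℂ) : ℂ := ∑ i, star (u i) * v i

def tens3 (a b c : Fin 2 → ℂ) : Q3 → ℂ := fun p => a p.1 * b p.2.1 * c p.2.2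

/-- Tensor product of three single-qubit operators. -/
def kron3 (A B C : Matrix (Fin 2) (Fin 2) ℂ) : Matrix Q3 Q3 ℂ :=
  Matrix.of fun p q => A p.1 q.1 * B p.2.1 q.2.1 * C p.2.2 q.2.2

/-- Single-qubit reduced density matrices of a three-qubit pure state. -/
def rdm0 (ψ : Q3 → ℂ) : Matrix (Fin 2) (Fin 2) ℂ :=
  Matrix.of fun i j => ∑ k, ∑ l, ψ (i, k, l) * star (ψ (j, k, l))
def rdm1 (ψ : Q3 → ℂ) : Matrix (Fin 2) (Fin 2) ℂ :=
  Matrix.of fun i j => ∑ k, ∑ l, ψ (k, i, l) * star (ψ (k, j, l))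
def rdm2 (ψ : Q3 → ℂ) : Matrix (Fin 2) (Fin 2) ℂ :=
  Matrix.of fun i j => ∑ k, ∑ l, ψ (k, l, i) * star (ψ (k, l, j))

/-- The GME concurrence `√(2·min_i(1 − Tr ρᵢ²))` of a three-qubit pure state. -/
def gmeConcurrence (ψ : Q3 → ℂ) : ℝ :=
  Real.sqrt (2 * min (min (1 - ((rdm0 ψ * rdm0 ψ).trace).re)
      (1 - ((rdm1 ψ * rdm1 ψ).trace).re)) (1 - ((rdm2 ψ * rdm2 ψ).trace).re))

lemma inner2_eq_dotProduct (u v : Fin 2 → ℂ) : inner2 u v = star u ⬝ᵥ v := rfl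

lemma inner2_swap (u v : Fin 2 → ℂ) : inner2 v u = star (inner2 u v) := by
  rw [inner2_eq_dotProduct, inner2_eq_dotProduct, star_dotProduct]

lemma inner2_mulVec_mulVec {M : Matrix (Fin 2) (Fin 2) ℂ} (hM : M ∈ unitaryGroup (Fin 2) ℂ)
    (u v : Fin 2 → ℂ) : inner2 (M *ᵥ u) (M *ᵥ v) = inner2 u v := by
  rw [inner2_eq_dotProduct, inner2_eq_dotProduct, star_mulVec, ← dotProduct_mulVec,
    mulVec_mulVec, ← star_eq_conjTranspose, mem_unitaryGroup_iff'.mp hM, one_mulVec]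

def OrthonormalPair (u v : Fin 2 → ℂ) : Prop :=
  inner2 u u = 1 ∧ inner2 v v = 1 ∧ inner2 u v = 0

lemma vecMulVec_add_vecMulVec_eq_one {u v : Fin 2 → ℂ} (h : OrthonormalPair u v) :
    vecMulVec u (star u) + vecMulVec v (star v) = 1 := by
  obtain ⟨hu, hv, huv⟩ := h
  have hvu : inner2 v u = 0 := by rw [inner2_swap, huv, star_zero]
  simp only [inner2, Fin.sum_univ_two] at hu hv huv hvu
  -- the matrix with columns `u`, `v` is unitary, hence so is its adjoint
  let M : Matrix (Fin 2) (Fin 2) ℂ := of fun i j => ![u, v] j i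
  have hM : Mᴴ * M = 1 := by
    ext p q
    fin_cases p <;> fin_cases q <;>
      simpa [M, Matrix.mul_apply, Fin.sum_univ_two, one_apply]
  have hM' : M * Mᴴ = 1 := mul_eq_one_comm.mp hM
  ext i j
  simpa [M, Matrix.mul_apply, vecMulVec_apply, Fin.sum_univ_two] using
    congrFun (congrFun hM' i) j

lemma kron3_mulVec_tens3 (A B C : Matrix (Fin 2) (Fin 2) ℂ) (x y z : Fin 2 → ℂ) :
    kron3 A B C *ᵥ tens3 x y z = tens3 (A *ᵥ x) (B *ᵥ y) (C *ᵥ z) := by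
  funext p
  simp only [mulVec, dotProduct, kron3, tens3, of_apply, Fintype.sum_prod_type, Fin.sum_univ_two]
  ring

lemma rdm0_smul (c : ℂ) (ψ : Q3 → ℂ) : rdm0 (c • ψ) = (c * star c) • rdm0 ψ := by
  ext i j
  simp only [rdm0, of_apply, Matrix.smul_apply, Pi.smul_apply, smul_eq_mul, star_mul',
    Fin.sum_univ_two]
  ring

lemma rdm1_eq_rdm0 (ψ : Q3 → ℂ) : rdm1 ψ = rdm0 fun p => ψ (p.2.1, p.1, p.2.2) := rfl

lemma rdm2_eq_rdm0 (ψ : Q3 → ℂ) : rdm2 ψ = rdm0 fun p => ψ (p.2.1, p.2.2, p.1) := rfl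

lemma rdm0_tens3_add_tens3 (a₀ a₁ a₂ b₀ b₁ b₂ : Fin 2 → ℂ) :
    rdm0 (tens3 a₀ a₁ a₂ + tens3 b₀ b₁ b₂) =
      (inner2 a₁ a₁ * inner2 a₂ a₂) • vecMulVec a₀ (star a₀) +
      (inner2 b₁ a₁ * inner2 b₂ a₂) • vecMulVec a₀ (star b₀) +
      (inner2 a₁ b₁ * inner2 a₂ b₂) • vecMulVec b₀ (star a₀) +
      (inner2 b₁ b₁ * inner2 b₂ b₂) • vecMulVec b₀ (star b₀) := by
  ext i j
  simp only [rdm0, tens3, inner2, of_apply, Matrix.add_apply, Matrix.smul_apply, Pi.add_apply,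
    Pi.star_apply, vecMulVec_apply, smul_eq_mul, star_add, star_mul', Fin.sum_univ_two]
  ring

lemma rdm0_tens3_add_tens3_eq_one {a₀ a₁ a₂ b₀ b₁ b₂ : Fin 2 → ℂ} (h₀ : OrthonormalPair a₀ b₀)
    (h₁ : OrthonormalPair a₁ b₁) (ha₂ : inner2 a₂ a₂ = 1) (hb₂ : inner2 b₂ b₂ = 1) :
    rdm0 (tens3 a₀ a₁ a₂ + tens3 b₀ b₁ b₂) = 1 := by
  obtain ⟨ha₁, hb₁, hab₁⟩ := h₁
  rw [rdm0_tens3_add_tens3, inner2_swap a₁ b₁, hab₁, ha₁, hb₁, ha₂, hb₂]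
  simpa using vecMulVec_add_vecMulVec_eq_one h₀

lemma rdm_smul_tens3_add_tens3_eq_half_one {c : ℂ} (hc : c * star c = 1 / 2)
    {a b : Fin 3 → Fin 2 → ℂ} (h : ∀ i, OrthonormalPair (a i) (b i)) :
    let ψ := c • (tens3 (a 0) (a 1) (a 2) + tens3 (b 0) (b 1) (b 2))
    rdm0 ψ = (1 / 2 : ℂ) • 1 ∧ rdm1 ψ = (1 / 2 : ℂ) • 1 ∧ rdm2 ψ = (1 / 2 : ℂ) • 1 := by
  intro ψ
  have h₁ : rdm1 ψ = rdm0 (c • (tens3 (a 1) (a 0) (a 2) + tens3 (b 1) (b 0) (b 2))) := by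
    rw [rdm1_eq_rdm0]
    congr 1
    funext p
    simp only [ψ, tens3, Pi.smul_apply, Pi.add_apply]
    ring
  have h₂ : rdm2 ψ = rdm0 (c • (tens3 (a 2) (a 0) (a 1) + tens3 (b 2) (b 0) (b 1))) := by
    rw [rdm2_eq_rdm0]
    congr 1
    funext p
    simp only [ψ, tens3, Pi.smul_apply, Pi.add_apply]
    ring
  rw [h₁, h₂, rdm0_smul, rdm0_smul, rdm0_smul, hc,
    rdm0_tens3_add_tens3_eq_one (h 0) (h 1) (h 2).1 (h 2).2.1,
    rdm0_tens3_add_tens3_eq_one (h 1) (h 0) (h 2).1 (h 2).2.1,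
    rdm0_tens3_add_tens3_eq_one (h 2) (h 0) (h 1).1 (h 1).2.1]
  exact ⟨rfl, rfl, rfl⟩

lemma re_trace_half_one_mul_self :
    (((1 / 2 : ℂ) • (1 : Matrix (Fin 2) (Fin 2) ℂ)) * ((1 / 2 : ℂ) • 1)).trace.re = 1 / 2 := by
  norm_num [smul_mul, mul_smul, trace_smul, trace_one]

lemma gmeConcurrence_eq_one {ψ : Q3 → ℂ} (h₀ : rdm0 ψ = (1 / 2 : ℂ) • 1)
    (h₁ : rdm1 ψ = (1 / 2 : ℂ) • 1) (h₂ : rdm2 ψ = (1 / 2 : ℂ) • 1) : gmeConcurrence ψ = 1 := by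
  rw [gmeConcurrence, h₀, h₁, h₂, re_trace_half_one_mul_self]
  norm_num

/-- under the orthogonality conditions, the normalized GHZ-type switch output
has all single-qubit reduced density matrices equal to `(1/2)·I`, hence `Tr ρᵢ² = 1/2` and
GME concurrence `1`. -/
theorem switch_output_GME
    (U Ut : Fin 3 → Matrix (Fin 2) (Fin 2) ℂ)
    (hU : ∀ i, U i ∈ Matrix.unitaryGroup (Fin 2) ℂ)
    (hUt : ∀ i, Ut i ∈ Matrix.unitaryGroup (Fin 2) ℂ)
    (φ : Fin 3 → (Fin 2 → ℂ)) (hφ : ∀ i, inner2 (φ i) (φ i) = 1)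
    (horth : ∀ i, inner2 ((Ut i * U i).mulVec (φ i)) ((U i * Ut i).mulVec (φ i)) = 0) :
    let ψ := ((Real.sqrt 2 : ℝ) : ℂ)⁻¹ •
      ((kron3 (U 0 * Ut 0) (U 1 * Ut 1) (U 2 * Ut 2) +
        kron3 (Ut 0 * U 0) (Ut 1 * U 1) (Ut 2 * U 2)).mulVec (tens3 (φ 0) (φ 1) (φ 2)))
    rdm0 ψ = (1 / 2 : ℂ) • (1 : Matrix (Fin 2) (Fin 2) ℂ) ∧
    rdm1 ψ = (1 / 2 : ℂ) • (1 : Matrix (Fin 2) (Fin 2) ℂ) ∧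
    rdm2 ψ = (1 / 2 : ℂ) • (1 : Matrix (Fin 2) (Fin 2) ℂ) ∧
    ((rdm0 ψ * rdm0 ψ).trace).re = 1 / 2 ∧
    ((rdm1 ψ * rdm1 ψ).trace).re = 1 / 2 ∧
    ((rdm2 ψ * rdm2 ψ).trace).re = 1 / 2 ∧
    gmeConcurrence ψ = 1 := by
  intro ψ
  have hON : ∀ i, OrthonormalPair ((U i * Ut i) *ᵥ φ i) ((Ut i * U i) *ᵥ φ i) := fun i =>
    ⟨by rw [inner2_mulVec_mulVec (mul_mem (hU i) (hUt i)), hφ i],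
      by rw [inner2_mulVec_mulVec (mul_mem (hUt i) (hU i)), hφ i],
      by rw [inner2_swap, horth i, star_zero]⟩
  have hc : ((Real.sqrt 2 : ℝ) : ℂ)⁻¹ * star ((Real.sqrt 2 : ℝ) : ℂ)⁻¹ = 1 / 2 := by
    rw [star_inv₀, Complex.star_def, Complex.conj_ofReal, ← mul_inv, ← Complex.ofReal_mul,
      Real.mul_self_sqrt zero_le_two]
    norm_num
  obtain ⟨h₀, h₁, h₂⟩ := rdm_smul_tens3_add_tens3_eq_half_one hc hON
  simp only [← kron3_mulVec_tens3, ← add_mulVec] at h₀ h₁ h₂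
  exact ⟨h₀, h₁, h₂, h₀ ▸ re_trace_half_one_mul_self, h₁ ▸ re_trace_half_one_mul_self,
    h₂ ▸ re_trace_half_one_mul_self, gmeConcurrence_eq_one h₀ h₁ h₂⟩
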